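/- arXiv:2104.03012 — 7 statements merged into one kernel-verified Lean document; each statement's English description precedes it below -/
import Mathlib

section
/- Let 0 < r₃ < r₂ be real numbers and let U : [r₃, r₂] → ℝ be twice continuously differentiable with U(r₃) = U(r₂) = 0 and U(r) > 0 for every r ∈ (r₃, r₂). Then there exists r ∈ (r₃, r₂) such that U''(r)/2 + U'(r)/r < 0. -/
/-!
If the tangential pressure `U''/2 + U'/r` were nonnegative between the horizons, then
`(r² U')' = 2 r² (U''/2 + U'/r) ≥ 0` would make `r² U'` nondecreasing there. But `U` vanishes at
both ends and is positive in between, so by the mean value theorem `U'` is positive at some point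
and negative at a later one, and so is `r² U'`.
-/

open Set

theorem hasDerivWithinAt_sq_mul {f : ℝ → ℝ} {f' x : ℝ} {s : Set ℝ}
    (hf : HasDerivWithinAt f f' s x) (hx : x ≠ 0) :
    HasDerivWithinAt (fun r => r ^ 2 * f r) (2 * x ^ 2 * (f' / 2 + f x / x)) s x := by
  refine ((hasDerivWithinAt_pow 2 x).fun_mul hf).congr_deriv ?_
  field_simp
  ring

theorem monotoneOn_sq_mul_of_nonneg {f f' : ℝ → ℝ} {a b : ℝ} (ha : 0 < a)
    (hf : ∀ r ∈ Icc a b, HasDerivWithinAt f (f' r) (Icc a b) r)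
    (hnonneg : ∀ r ∈ Ioo a b, 0 ≤ f' r / 2 + f r / r) :
    MonotoneOn (fun r => r ^ 2 * f r) (Icc a b) := by
  have hderiv : ∀ r ∈ Icc a b, HasDerivWithinAt (fun r => r ^ 2 * f r)
      (2 * r ^ 2 * (f' r / 2 + f r / r)) (Icc a b) r :=
    fun r hr => hasDerivWithinAt_sq_mul (hf r hr) (ha.trans_le hr.1).ne'
  refine monotoneOn_of_hasDerivWithinAt_nonneg (f' := fun r => 2 * r ^ 2 * (f' r / 2 + f r / r))
    (convex_Icc a b) (fun r hr => (hderiv r hr).continuousWithinAt) ?_ ?_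
  · rw [interior_Icc]
    exact fun r hr => (hderiv r (Ioo_subset_Icc_self hr)).mono Ioo_subset_Icc_self
  · rw [interior_Icc]
    exact fun r hr => mul_nonneg (by positivity) (hnonneg r hr)

theorem exists_deriv_pos_lt_deriv_neg_of_pos_between_zeros {U U' : ℝ → ℝ} {a b : ℝ}
    (hab : a < b) (hcont : ContinuousOn U (Icc a b))
    (hderiv : ∀ r ∈ Ioo a b, HasDerivAt U (U' r) r)
    (ha : U a = 0) (hb : U b = 0) (hpos : ∀ r ∈ Ioo a b, 0 < U r) :
    ∃ c ∈ Ioo a b, ∃ d ∈ Ioo a b, c < d ∧ 0 < U' c ∧ U' d < 0 := by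
  obtain ⟨m, ham, hmb⟩ := exists_between hab
  have hUm : 0 < U m := hpos m ⟨ham, hmb⟩
  obtain ⟨c, hc, hslope_c⟩ := exists_hasDerivAt_eq_slope U U' ham
    (hcont.mono (Icc_subset_Icc le_rfl hmb.le)) fun r hr => hderiv r ⟨hr.1, hr.2.trans hmb⟩
  obtain ⟨d, hd, hslope_d⟩ := exists_hasDerivAt_eq_slope U U' hmb
    (hcont.mono (Icc_subset_Icc ham.le le_rfl)) fun r hr => hderiv r ⟨ham.trans hr.1, hr.2⟩
  refine ⟨c, ⟨hc.1, hc.2.trans hmb⟩, d, ⟨ham.trans hd.1, hd.2⟩, hc.2.trans hd.1, ?_, ?_⟩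
  · rw [hslope_c, ha]
    exact div_pos (by linarith) (by linarith)
  · rw [hslope_d, hb]
    exact div_neg_of_neg_of_pos (by linarith) (by linarith)

theorem sec_violated_between_horizons_general
    (r₃ r₂ : ℝ) (hr₃ : 0 < r₃) (hlt : r₃ < r₂)
    (U U' U'' : ℝ → ℝ)
    (hU' : ∀ r ∈ Set.Icc r₃ r₂, HasDerivWithinAt U (U' r) (Set.Icc r₃ r₂) r)
    (hU'' : ∀ r ∈ Set.Icc r₃ r₂, HasDerivWithinAt U' (U'' r) (Set.Icc r₃ r₂) r)
    (h₃ : U r₃ = 0) (h₂ : U r₂ = 0)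
    (hpos : ∀ r ∈ Set.Ioo r₃ r₂, 0 < U r) :
    ∃ r ∈ Set.Ioo r₃ r₂, U'' r / 2 + U' r / r < 0 := by
  by_contra! hsec
  obtain ⟨a, ha, b, hb, hab, hU'a, hU'b⟩ :=
    exists_deriv_pos_lt_deriv_neg_of_pos_between_zeros hlt
      (fun r hr => (hU' r hr).continuousWithinAt)
      (fun r hr => (hU' r (Ioo_subset_Icc_self hr)).hasDerivAt (Icc_mem_nhds hr.1 hr.2))
      h₃ h₂ hpos
  have hmono : a ^ 2 * U' a ≤ b ^ 2 * U' b :=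
    monotoneOn_sq_mul_of_nonneg hr₃ hU'' hsec (Ioo_subset_Icc_self ha)
      (Ioo_subset_Icc_self hb) hab.le
  have hga : 0 < a ^ 2 * U' a := mul_pos (pow_pos (hr₃.trans ha.1) 2) hU'a
  have hgb : b ^ 2 * U' b < 0 := mul_neg_of_pos_of_neg (pow_pos (hr₃.trans hb.1) 2) hU'b
  linarith

/-- Let `0 < r₃ < r₂` and let `U` be twice continuously differentiable
on `[r₃, r₂]` with `U r₃ = U r₂ = 0` and `U > 0` on `(r₃, r₂)`. Then there is some
`r ∈ (r₃, r₂)` where `U'' r / 2 + U' r / r < 0`, i.e. the strong energy condition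
is violated between the two horizons. -/
theorem sec_violated_between_horizons
    (r₃ r₂ : ℝ) (hr₃ : 0 < r₃) (hlt : r₃ < r₂)
    (U U' U'' : ℝ → ℝ)
    (hU' : ∀ r ∈ Set.Icc r₃ r₂, HasDerivWithinAt U (U' r) (Set.Icc r₃ r₂) r)
    (hU'' : ∀ r ∈ Set.Icc r₃ r₂, HasDerivWithinAt U' (U'' r) (Set.Icc r₃ r₂) r)
    (hU''cont : ContinuousOn U'' (Set.Icc r₃ r₂))
    (h₃ : U r₃ = 0) (h₂ : U r₂ = 0)
    (hpos : ∀ r ∈ Set.Ioo r₃ r₂, 0 < U r) :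
    ∃ r ∈ Set.Ioo r₃ r₂, U'' r / 2 + U' r / r < 0 :=
  sec_violated_between_horizons_general r₃ r₂ hr₃ hlt U U' U'' hU' hU'' h₃ h₂ hpos
end

section
/- Let 0 < a < b and let U : (a,b) → ℝ be twice differentiable with U''(r)/2 + U'(r)/r ≥ 0 for all r ∈ (a,b). Then U has no strict local maximum in (a,b); that is, there exist no c ∈ (a,b) and δ > 0 with (c−δ, c+δ) ⊆ (a,b) such that U(r) < U(c) for all r ∈ (c−δ, c+δ) with r ≠ c. -/
/-!
Multiplying the strong energy condition by `2 r²` gives `(r² U')' = 2 r² (U''/2 + U'/r) ≥ 0`,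
so `r² U'` is nondecreasing. At a local maximum `c` we have `U'(c) = 0`, hence `U' ≥ 0` to the
right of `c`, so `U` is nondecreasing there and cannot drop strictly below `U(c)`.
-/

open Set

section

variable {a b : ℝ} {U U' U'' : ℝ → ℝ}

lemma hasDerivAt_sq_mul {r : ℝ} (hU'' : HasDerivAt U' (U'' r) r) (hr : r ≠ 0) :
    HasDerivAt (fun x => x ^ 2 * U' x) (2 * r ^ 2 * (U'' r / 2 + U' r / r)) r :=
  ((hasDerivAt_pow 2 r).mul hU'').congr_deriv (by field_simp; ring)

lemma monotoneOn_sq_mul_of_nonneg_s1 (ha : 0 ≤ a)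
    (hU'' : ∀ r ∈ Ioo a b, HasDerivAt U' (U'' r) r)
    (hp : ∀ r ∈ Ioo a b, 0 ≤ U'' r / 2 + U' r / r) :
    MonotoneOn (fun r => r ^ 2 * U' r) (Ioo a b) := by
  have hpos : ∀ r ∈ Ioo a b, 0 < r := fun r hr => ha.trans_lt hr.1
  refine monotoneOn_of_hasDerivWithinAt_nonneg
    (f' := fun r => 2 * r ^ 2 * (U'' r / 2 + U' r / r)) (convex_Ioo a b)
    (fun r hr => (hasDerivAt_sq_mul (hU'' r hr) (hpos r hr).ne').continuousAt.continuousWithinAt)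
    (fun r hr => ?_) (fun r hr => ?_) <;> rw [interior_Ioo] at hr
  · exact (hasDerivAt_sq_mul (hU'' r hr) (hpos r hr).ne').hasDerivWithinAt
  · have := hp r hr
    positivity

lemma nonneg_of_monotoneOn_sq_mul {g : ℝ → ℝ} (ha : 0 ≤ a)
    (hg : MonotoneOn (fun r => r ^ 2 * g r) (Ioo a b)) {c x : ℝ} (hc : c ∈ Ioo a b)
    (hx : x ∈ Ioo a b) (hcx : c ≤ x) (hgc : g c = 0) : 0 ≤ g x := by
  have hsq : 0 ≤ x ^ 2 * g x := by simpa [hgc] using hg hc hx hcx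
  exact nonneg_of_mul_nonneg_right hsq (pow_pos (ha.trans_lt hx.1) 2)

lemma monotoneOn_Ico_of_hasDerivAt_eq_zero (ha : 0 ≤ a)
    (hU' : ∀ r ∈ Ioo a b, HasDerivAt U (U' r) r)
    (hU'' : ∀ r ∈ Ioo a b, HasDerivAt U' (U'' r) r)
    (hp : ∀ r ∈ Ioo a b, 0 ≤ U'' r / 2 + U' r / r) {c : ℝ} (hc : c ∈ Ioo a b)
    (hcrit : U' c = 0) : MonotoneOn U (Ico c b) := by
  have hsub : Ico c b ⊆ Ioo a b := fun r hr => ⟨hc.1.trans_le hr.1, hr.2⟩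
  refine monotoneOn_of_hasDerivWithinAt_nonneg (f' := U') (convex_Ico c b)
    (fun r hr => (hU' r (hsub hr)).continuousAt.continuousWithinAt)
    (fun r hr => ?_) (fun r hr => ?_) <;> rw [interior_Ico] at hr
  · exact (hU' r (hsub (Ioo_subset_Ico_self hr))).hasDerivWithinAt
  · exact nonneg_of_monotoneOn_sq_mul ha (monotoneOn_sq_mul_of_nonneg_s1 ha hU'' hp) hc
      (hsub (Ioo_subset_Ico_self hr)) hr.1.le hcrit

end

theorem sec_no_strict_local_max_general
    (a b : ℝ) (ha : 0 < a)
    (U U' U'' : ℝ → ℝ)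
    (hU' : ∀ r ∈ Set.Ioo a b, HasDerivAt U (U' r) r)
    (hU'' : ∀ r ∈ Set.Ioo a b, HasDerivAt U' (U'' r) r)
    (hsec : ∀ r ∈ Set.Ioo a b, 0 ≤ U'' r / 2 + U' r / r) :
    ¬ ∃ c ∈ Set.Ioo a b, ∃ δ > (0 : ℝ),
        Set.Ioo (c - δ) (c + δ) ⊆ Set.Ioo a b ∧
        ∀ r ∈ Set.Ioo (c - δ) (c + δ), r ≠ c → U r < U c := by
  rintro ⟨c, hc, δ, hδ, hsub, hmax⟩
  have hball : Ioo (c - δ) (c + δ) ∈ nhds c := Ioo_mem_nhds (by linarith) (by linarith)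
  have hloc : IsLocalMax U c := by
    filter_upwards [hball] with r hr
    rcases eq_or_ne r c with rfl | hrc
    exacts [le_rfl, (hmax r hr hrc).le]
  have hmono : MonotoneOn U (Ico c b) :=
    monotoneOn_Ico_of_hasDerivAt_eq_zero ha.le hU' hU'' hsec hc (hloc.hasDerivAt_eq_zero (hU' c hc))
  have hr : c + δ / 2 ∈ Ioo (c - δ) (c + δ) := ⟨by linarith, by linarith⟩
  have hne : c + δ / 2 ≠ c := by linarith
  exact (hmax _ hr hne).not_ge
    (hmono ⟨le_rfl, hc.2⟩ ⟨by linarith, (hsub hr).2⟩ (by linarith))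

/-- If `0 < a < b` and `U` is twice differentiable on `(a, b)` with
`U'' r / 2 + U' r / r ≥ 0` for all `r ∈ (a, b)`, then `U` has no strict local
maximum in `(a, b)`. -/
theorem sec_no_strict_local_max
    (a b : ℝ) (ha : 0 < a) (hab : a < b)
    (U U' U'' : ℝ → ℝ)
    (hU' : ∀ r ∈ Set.Ioo a b, HasDerivAt U (U' r) r)
    (hU'' : ∀ r ∈ Set.Ioo a b, HasDerivAt U' (U'' r) r)
    (hsec : ∀ r ∈ Set.Ioo a b, 0 ≤ U'' r / 2 + U' r / r) :
    ¬ ∃ c ∈ Set.Ioo a b, ∃ δ > (0 : ℝ),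
        Set.Ioo (c - δ) (c + δ) ⊆ Set.Ioo a b ∧
        ∀ r ∈ Set.Ioo (c - δ) (c + δ), r ≠ c → U r < U c :=
  sec_no_strict_local_max_general a b ha U U' U'' hU' hU'' hsec
end

section
/- Let d ≥ 2 be an integer, let 0 < z₁ < z₂, and let f, χ : [z₁, z₂] → ℝ be continuously differentiable with f ≥ 0 on [z₁, z₂] and f(z₁) = f(z₂) = 0. Define u(z) = z⁻² f(z) e^{−χ(z)}. If on every connected component of the open set {z ∈ (z₁, z₂) : f(z) > 0} the function z ↦ z^{2−d} √(f(z)) · u'(z) is monotone nondecreasing, then f ≡ 0 on [z₁, z₂]. -/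
/-- condition C1 in the symmetric gauge. Let `d ≥ 2`, `0 < z₁ < z₂`,
and let `f, χ` be continuously differentiable on `[z₁, z₂]` with `f ≥ 0` on
`[z₁, z₂]` and `f z₁ = f z₂ = 0`. Put `u z = z⁻² f z e^(−χ z)`. If on every
connected component of `{z ∈ (z₁, z₂) | f z > 0}` the function
`z ↦ z^(2−d) √(f z) · u' z` is monotone nondecreasing, then `f ≡ 0` on `[z₁, z₂]`. -/
theorem no_static_region_between_horizons_C1
    (d : ℕ) (hd : 2 ≤ d)
    (z₁ z₂ : ℝ) (hz₁ : 0 < z₁) (hz : z₁ < z₂)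
    (f χ : ℝ → ℝ)
    (hf : ContDiffOn ℝ 1 f (Set.Icc z₁ z₂))
    (hχ : ContDiffOn ℝ 1 χ (Set.Icc z₁ z₂))
    (hfnonneg : ∀ z ∈ Set.Icc z₁ z₂, 0 ≤ f z)
    (hf₁ : f z₁ = 0) (hf₂ : f z₂ = 0)
    (u u' : ℝ → ℝ)
    (hu : ∀ z, u z = f z * Real.exp (-(χ z)) / z ^ 2)
    (hu' : ∀ z ∈ Set.Ioo z₁ z₂, HasDerivAt u (u' z) z)
    (hmono : ∀ x ∈ {z ∈ Set.Ioo z₁ z₂ | 0 < f z},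
        MonotoneOn (fun z => z ^ ((2 : ℤ) - d) * Real.sqrt (f z) * u' z)
          (connectedComponentIn {z ∈ Set.Ioo z₁ z₂ | 0 < f z} x)) :
    ∀ z ∈ Set.Icc z₁ z₂, f z = 0 := by
  have hfc : ContinuousOn f (Set.Icc z₁ z₂) := hf.continuousOn
  have hχc : ContinuousOn χ (Set.Icc z₁ z₂) := hχ.continuousOn
  -- continuity of u on [z₁, z₂]
  have huc : ContinuousOn u (Set.Icc z₁ z₂) := by
    have h1 : ContinuousOn (fun z => f z * Real.exp (-(χ z)) / z ^ 2) (Set.Icc z₁ z₂) := by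
      apply ContinuousOn.div
      · exact hfc.mul (Real.continuous_exp.comp_continuousOn hχc.neg)
      · exact (continuous_pow 2).continuousOn
      · intro z hz'
        have : (0:ℝ) < z := lt_of_lt_of_le hz₁ hz'.1
        positivity
    exact h1.congr fun z _ => hu z
  -- positivity of u where f is positive
  have hupos : ∀ z : ℝ, 0 < z → 0 < f z → 0 < u z := by
    intro z hz0 hfz
    rw [hu]
    positivity
  by_contra hcon
  push_neg at hcon
  obtain ⟨z₀, hz₀, hfz₀ne⟩ := hcon
  have hfz₀ : 0 < f z₀ := (hfnonneg z₀ hz₀).lt_of_ne (Ne.symm hfz₀ne)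
  have hz₀o : z₀ ∈ Set.Ioo z₁ z₂ := by
    rcases hz₀ with ⟨h1, h2⟩
    refine ⟨lt_of_le_of_ne h1 fun h => hfz₀ne (by rw [← h]; exact hf₁), 
      lt_of_le_of_ne h2 fun h => hfz₀ne (by rw [h]; exact hf₂)⟩
  set S := {z ∈ Set.Ioo z₁ z₂ | 0 < f z} with hS
  have hSsub : S ⊆ Set.Ioo z₁ z₂ := fun z hz' => hz'.1
  have hSopen : IsOpen S := by
    have heq : S = Set.Ioo z₁ z₂ ∩ f ⁻¹' Set.Ioi 0 := by
      ext x; simp [hS, Set.mem_setOf_eq, and_comm]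
    rw [heq]
    exact (hfc.mono Set.Ioo_subset_Icc_self).isOpen_inter_preimage isOpen_Ioo isOpen_Ioi
  have hz₀S : z₀ ∈ S := ⟨hz₀o, hfz₀⟩
  set C := connectedComponentIn S z₀ with hC
  have hCopen : IsOpen C := hSopen.connectedComponentIn
  have hCsub : C ⊆ S := connectedComponentIn_subset S z₀
  have hz₀C : z₀ ∈ C := mem_connectedComponentIn hz₀S
  have hCne : C.Nonempty := ⟨z₀, hz₀C⟩
  have hCbdd_below : BddBelow C := ⟨z₁, fun x hx => le_of_lt (hSsub (hCsub hx)).1⟩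
  have hCbdd_above : BddAbove C := ⟨z₂, fun x hx => le_of_lt (hSsub (hCsub hx)).2⟩
  set a := sInf C with ha
  set b := sSup C with hb
  have hz₁a : z₁ ≤ a := le_csInf hCne fun x hx => le_of_lt (hSsub (hCsub hx)).1
  have hbz₂ : b ≤ z₂ := csSup_le hCne fun x hx => le_of_lt (hSsub (hCsub hx)).2
  have haz₀ : a ≤ z₀ := csInf_le hCbdd_below hz₀C
  have hz₀b : z₀ ≤ b := le_csSup hCbdd_above hz₀C
  -- a ∉ C, b ∉ C since C is open
  have haC : a ∉ C := by
    intro haC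
    obtain ⟨ε, hε, hball⟩ := Metric.isOpen_iff.1 hCopen a haC
    have : a - ε / 2 ∈ C := hball (by
      rw [Metric.mem_ball, Real.dist_eq, abs_of_neg (by linarith : a - ε / 2 - a < 0)]
      linarith)
    have := csInf_le hCbdd_below this
    linarith
  have hbC : b ∉ C := by
    intro hbC
    obtain ⟨ε, hε, hball⟩ := Metric.isOpen_iff.1 hCopen b hbC
    have : b + ε / 2 ∈ C := hball (by
      rw [Metric.mem_ball, Real.dist_eq, abs_of_pos (by linarith : 0 < b + ε / 2 - b)]
      linarith)
    have := le_csSup hCbdd_above this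
    linarith
  have haz₀' : a < z₀ := lt_of_le_of_ne haz₀ fun h => haC (h ▸ hz₀C)
  have hz₀b' : z₀ < b := lt_of_le_of_ne hz₀b fun h => hbC (h ▸ hz₀C)
  -- Ioo a b ⊆ C by ordConnectedness
  have hord : Set.OrdConnected C := isPreconnected_connectedComponentIn.ordConnected
  have hIoo : Set.Ioo a b ⊆ C := by
    intro x hx
    obtain ⟨p, hpC, hpx⟩ := (csInf_lt_iff hCbdd_below hCne).1 hx.1
    obtain ⟨q, hqC, hxq⟩ := (lt_csSup_iff hCbdd_above hCne).1 hx.2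
    exact hord.out hpC hqC ⟨le_of_lt hpx, le_of_lt hxq⟩
  -- any point in the closure of C that lies in S belongs to C
  have hclosS : ∀ e : ℝ, e ∈ closure C → e ∈ S → e ∈ C := by
    intro e hecl heS
    obtain ⟨ε, hε, hball⟩ := Metric.isOpen_iff.1 hSopen e heS
    obtain ⟨y, hyC, hy⟩ := Metric.mem_closure_iff.1 hecl ε hε
    have hyball : y ∈ Metric.ball e ε := by rwa [Metric.mem_ball, dist_comm]
    have hpre : IsPreconnected (Metric.ball e ε) := (convex_ball e ε).isPreconnected
    have hsub : Metric.ball e ε ⊆ connectedComponentIn S y :=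
      hpre.subset_connectedComponentIn hyball hball
    have heq2 : connectedComponentIn S z₀ = connectedComponentIn S y := connectedComponentIn_eq hyC
    show e ∈ connectedComponentIn S z₀
    rw [heq2]
    exact hsub (Metric.mem_ball_self hε)
  have haIcc : a ∈ Set.Icc z₁ z₂ := ⟨hz₁a, by linarith⟩
  have hbIcc : b ∈ Set.Icc z₁ z₂ := ⟨by linarith, hbz₂⟩
  -- f vanishes at a and at b
  have hfa : f a = 0 := by
    by_contra hne
    have hfa' : 0 < f a := (hfnonneg a haIcc).lt_of_ne (Ne.symm hne)
    have hcl : a ∈ closure C := csInf_mem_closure hCne hCbdd_below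
    rcases eq_or_lt_of_le hz₁a with h | h
    · exact hne (h ▸ hf₁)
    · have haS : a ∈ S := ⟨⟨h, lt_of_le_of_lt haz₀ hz₀o.2⟩, hfa'⟩
      exact haC (hclosS a hcl haS)
  have hfb : f b = 0 := by
    by_contra hne
    have hfb' : 0 < f b := (hfnonneg b hbIcc).lt_of_ne (Ne.symm hne)
    have hcl : b ∈ closure C := csSup_mem_closure hCne hCbdd_above
    rcases eq_or_lt_of_le hbz₂ with h | h
    · exact hne (h ▸ hf₂)
    · have hbS : b ∈ S := ⟨⟨lt_of_lt_of_le hz₀o.1 hz₀b, h⟩, hfb'⟩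
      exact hbC (hclosS b hcl hbS)
  have hua : u a = 0 := by rw [hu, hfa]; ring
  have hub : u b = 0 := by rw [hu, hfb]; ring
  have hz₀pos : 0 < z₀ := lt_trans hz₁ hz₀o.1
  have huz₀ : 0 < u z₀ := hupos z₀ hz₀pos hfz₀
  -- a point c in (a, z₀) with u' c > 0
  have hIccsub : Set.Icc a z₀ ⊆ Set.Icc z₁ z₂ := Set.Icc_subset_Icc hz₁a (le_of_lt hz₀o.2)
  have hexc : ∃ c ∈ Set.Ioo a z₀, 0 < u' c := by
    by_contra hno
    push_neg at hno
    have hanti : AntitoneOn u (Set.Icc a z₀) := by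
      apply antitoneOn_of_deriv_nonpos (convex_Icc a z₀) (huc.mono hIccsub)
      · intro x hx
        rw [interior_Icc] at hx
        have hxI : x ∈ Set.Ioo z₁ z₂ :=
          ⟨lt_of_le_of_lt hz₁a hx.1, lt_trans hx.2 hz₀o.2⟩
        exact (hu' x hxI).differentiableAt.differentiableWithinAt
      · intro x hx
        rw [interior_Icc] at hx
        have hxI : x ∈ Set.Ioo z₁ z₂ :=
          ⟨lt_of_le_of_lt hz₁a hx.1, lt_trans hx.2 hz₀o.2⟩
        rw [(hu' x hxI).deriv]
        exact hno x hx
    have := hanti (Set.left_mem_Icc.2 haz₀) (Set.right_mem_Icc.2 haz₀) haz₀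
    rw [hua] at this
    linarith
  obtain ⟨c, hc, huc'⟩ := hexc
  have hcC : c ∈ C := hIoo ⟨hc.1, lt_trans hc.2 hz₀b'⟩
  have hcS : c ∈ S := hCsub hcC
  have hcpos : 0 < c := lt_trans hz₁ hcS.1.1
  have hfc' : 0 < f c := hcS.2
  -- the monotone quantity
  have hgmono := hmono z₀ hz₀S
  have hgc : 0 < c ^ ((2 : ℤ) - d) * Real.sqrt (f c) * u' c := by
    have h1 : 0 < c ^ ((2 : ℤ) - d) := zpow_pos hcpos _
    have h2 : 0 < Real.sqrt (f c) := Real.sqrt_pos.2 hfc'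
    positivity
  -- u' is positive on (c, b)
  have hu'pos : ∀ x ∈ Set.Ioo c b, 0 < u' x := by
    intro x hx
    have hxC : x ∈ C := hIoo ⟨lt_trans hc.1 hx.1, hx.2⟩
    have hxS : x ∈ S := hCsub hxC
    have hxpos : 0 < x := lt_trans hz₁ hxS.1.1
    have hfx : 0 < f x := hxS.2
    have hle := hgmono hcC hxC (le_of_lt hx.1)
    by_contra hnp
    push_neg at hnp
    have hcoef : 0 ≤ x ^ ((2 : ℤ) - d) * Real.sqrt (f x) := by positivity
    have : x ^ ((2 : ℤ) - d) * Real.sqrt (f x) * u' x ≤ 0 :=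
      mul_nonpos_of_nonneg_of_nonpos hcoef hnp
    simp only at hle
    linarith
  have hcb : c < b := lt_trans hc.2 hz₀b'
  have hz₁c : z₁ ≤ c := le_trans hz₁a (le_of_lt hc.1)
  have hIccsub2 : Set.Icc c b ⊆ Set.Icc z₁ z₂ := Set.Icc_subset_Icc hz₁c hbz₂
  have hsm : StrictMonoOn u (Set.Icc c b) := by
    apply strictMonoOn_of_deriv_pos (convex_Icc c b) (huc.mono hIccsub2)
    intro x hx
    rw [interior_Icc] at hx
    have hxI : x ∈ Set.Ioo z₁ z₂ := ⟨lt_of_le_of_lt hz₁c hx.1, lt_of_lt_of_le hx.2 hbz₂⟩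
    rw [(hu' x hxI).deriv]
    exact hu'pos x hx
  have hucpos : 0 < u c := hupos c hcpos hfc'
  have := hsm (Set.left_mem_Icc.2 (le_of_lt hcb)) (Set.right_mem_Icc.2 (le_of_lt hcb)) hcb
  rw [hub] at this
  linarith
end

section
/- Let d ≥ 2 be an integer and let η be the Minkowski bilinear form on ℝ^{d+1}, η(x, y) = −x₀y₀ + Σ_{i=1}^{d} x_i y_i, with standard basis e₀, e₁, …, e_d. Let T be a symmetric bilinear form on ℝ^{d+1} such that T(l, l) ≥ 0 for every l ∈ ℝ^{d+1} with η(l, l) = 0, and such that T(e₀, e_A) = 0 for all A = 2, …, d. Define ρ = T(e₀, e₀), p_z = T(e₁, e₁), and the η-trace T̂ = −T(e₀, e₀) + Σ_{i=1}^{d} T(e_i, e_i). Then ϖ := d·ρ + T̂ − p_z ≥ 0. -/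
/-!
Each `e₀ + e_A` with `A ≥ 2` is null, and since `T` has no mixed components `T(e₀, e_A)`,
the null energy condition along it reads `ρ + T(e_A, e_A) ≥ 0`. Summing these `d - 1`
inequalities gives exactly `ϖ = (d - 1) ρ + Σ_{A ≥ 2} T(e_A, e_A) ≥ 0`.
-/

open Finset

def minkowski {n : ℕ} (x y : Fin (n + 1) → ℝ) : ℝ :=
  (∑ i, x i * y i) - 2 * x 0 * y 0

lemma minkowski_single_add_single_self {n : ℕ} {i : Fin (n + 1)} (hi : i ≠ 0) :
    minkowski (Pi.single 0 1 + Pi.single i 1) (Pi.single 0 1 + Pi.single i 1) = 0 := by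
  have hsq : ∀ k : Fin (n + 1), (Pi.single 0 1 + Pi.single i 1 : Fin (n + 1) → ℝ) k ^ 2
      = (Pi.single 0 1 : Fin (n + 1) → ℝ) k + (Pi.single i 1 : Fin (n + 1) → ℝ) k := by
    intro k
    by_cases h0 : k = 0 <;> by_cases hk : k = i <;> simp_all
  simp only [minkowski, ← sq, hsq, sum_add_distrib]
  norm_num [Ne.symm hi]

lemma apply_add_self_of_cross_eq_zero {R M : Type*} [CommSemiring R] [AddCommMonoid M]
    [Module R M] (T : M →ₗ[R] M →ₗ[R] R) {u v : M} (huv : T u v = 0) (hvu : T v u = 0) :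
    T (u + v) (u + v) = T u u + T v v := by
  simp [huv, hvu]

/-- Let `η` be the Minkowski bilinear form on `ℝ^(d+1)` (signature
`(−,+,…,+)`) and `T` a symmetric bilinear form satisfying the null energy
condition `T(l,l) ≥ 0` for all `η`-null `l`, with no mixed components
`T(e₀, e_A) = 0` for `A = 2, …, d`. With `ρ = T(e₀,e₀)`, `p_z = T(e₁,e₁)` and
the `η`-trace `T̂ = −T(e₀,e₀) + Σᵢ T(eᵢ,eᵢ)`, one has `ϖ = d·ρ + T̂ − p_z ≥ 0`. -/
theorem nec_implies_varpi_nonneg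
    (d : ℕ) (hd : 2 ≤ d)
    (η : (Fin (d + 1) → ℝ) → (Fin (d + 1) → ℝ) → ℝ)
    (hη : ∀ x y, η x y = (∑ i, x i * y i) - 2 * x 0 * y 0)
    (T : (Fin (d + 1) → ℝ) →ₗ[ℝ] (Fin (d + 1) → ℝ) →ₗ[ℝ] ℝ)
    (hsymm : ∀ x y, T x y = T y x)
    (e : Fin (d + 1) → (Fin (d + 1) → ℝ))
    (he : ∀ i, e i = Pi.single i (1 : ℝ))
    (hNEC : ∀ l : Fin (d + 1) → ℝ, η l l = 0 → 0 ≤ T l l)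
    (hmix : ∀ A : Fin (d + 1), 2 ≤ (A : ℕ) → T (e 0) (e A) = 0)
    (ρ pz Ttr : ℝ)
    (hρ : ρ = T (e 0) (e 0))
    (hpz : pz = T (e 1) (e 1))
    (hTtr : Ttr = (∑ i, T (e i) (e i)) - 2 * T (e 0) (e 0)) :
    0 ≤ (d : ℝ) * ρ + Ttr - pz := by
  obtain ⟨m, rfl⟩ : ∃ m, d = m + 1 := ⟨d - 1, by omega⟩
  obtain rfl : η = minkowski := funext₂ hη
  have htransverse : ∀ k : Fin m, 0 ≤ ρ + T (e k.succ.succ) (e k.succ.succ) := by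
    intro k
    have hk : 2 ≤ (k.succ.succ : ℕ) := by simp
    have hnull := hNEC (e 0 + e k.succ.succ) (by
      rw [he, he]; exact minkowski_single_add_single_self (Fin.succ_ne_zero k.succ))
    rwa [apply_add_self_of_cross_eq_zero T (hmix _ hk)
      (hsymm _ _ ▸ hmix _ hk), ← hρ] at hnull
  calc 0 ≤ ∑ k : Fin m, (ρ + T (e k.succ.succ) (e k.succ.succ)) :=
        sum_nonneg fun k _ => htransverse k
    _ = _ := by
        simp only [hρ, hpz, hTtr, Fin.sum_univ_succ, Fin.succ_zero_eq_one, sum_add_distrib,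
          sum_const, card_univ, Fintype.card_fin, nsmul_eq_mul]
        push_cast
        ring
end

section
/- Let d ≥ 2 be an integer, k ∈ {0, −1}, and 0 < z₁ < z₂. Let f, χ : [z₁, z₂] → ℝ be twice continuously differentiable and let w : [z₁, z₂] → ℝ satisfy w(z) ≥ 0 for all z. Define F(z) = (1/2) z^{1−d} e^{χ(z)/2} · (f e^{−χ})'(z). Suppose F'(z) = z^{−1−d} e^{−χ(z)/2} [w(z) − (d−2) k z²] for all z ∈ (z₁, z₂). Then it is impossible that simultaneously f(z₁) = f(z₂) = 0, f(z) > 0 for all z ∈ (z₁, z₂), f'(z₁) ≠ 0, and f'(z₂) ≠ 0. -/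
/-! At a zero of `f`, `F = ½ z^{1-d} e^{-χ/2} f'`, so `F` has the sign of `f'` there. A static
region `f > 0` between two simple zeros therefore has `F(z₁) > 0 > F(z₂)`. For `k ≤ 0`, `d ≥ 2`
and `w ≥ 0` the right-hand side of the equation for `F'` is nonnegative, so `F` is monotone on
`[z₁, z₂]`, a contradiction. -/

open Set Real

theorem IsMinOn.derivWithin_Icc_left_nonneg {f : ℝ → ℝ} {a b : ℝ} (hab : a < b)
    (h : IsMinOn f (Icc a b) a) : 0 ≤ derivWithin f (Icc a b) a := by
  have hcone : b - a ∈ posTangentConeAt (Icc a b) a :=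
    sub_mem_posTangentConeAt_of_segment_subset (segment_eq_Icc hab.le).subset
  have := h.localize.fderivWithin_nonneg hcone
  rw [← mul_one (b - a), ← smul_eq_mul, map_smul, fderivWithin_derivWithin, smul_eq_mul] at this
  exact nonneg_of_mul_nonneg_right this (sub_pos.2 hab)

theorem IsMinOn.derivWithin_Icc_right_nonpos {f : ℝ → ℝ} {a b : ℝ} (hab : a < b)
    (h : IsMinOn f (Icc a b) b) : derivWithin f (Icc a b) b ≤ 0 := by
  have hcone : a - b ∈ posTangentConeAt (Icc a b) b :=
    sub_mem_posTangentConeAt_of_segment_subset (by rw [segment_symm, segment_eq_Icc hab.le])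
  have := h.localize.fderivWithin_nonneg hcone
  rw [← mul_one (a - b), ← smul_eq_mul, map_smul, fderivWithin_derivWithin, smul_eq_mul] at this
  exact nonpos_of_mul_nonneg_right this (sub_neg.2 hab)

theorem monotoneOn_Icc_of_hasDerivAt_nonneg {F F' : ℝ → ℝ} {a b : ℝ}
    (hF : ContinuousOn F (Icc a b)) (hF' : ∀ z ∈ Ioo a b, HasDerivAt F (F' z) z)
    (hF'₀ : ∀ z ∈ Ioo a b, 0 ≤ F' z) : MonotoneOn F (Icc a b) :=
  monotoneOn_of_hasDerivWithinAt_nonneg (convex_Icc a b) hF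
    (fun z hz => (hF' z (by rwa [interior_Icc] at hz)).hasDerivWithinAt)
    (fun z hz => hF'₀ z (by rwa [interior_Icc] at hz))

theorem derivWithin_mul_of_eq_zero {𝕜 : Type*} [NontriviallyNormedField 𝕜] {f g : 𝕜 → 𝕜}
    {s : Set 𝕜} {z : 𝕜} (hf : DifferentiableWithinAt 𝕜 f s z)
    (hg : DifferentiableWithinAt 𝕜 g s z) (hfz : f z = 0) :
    derivWithin (fun t => f t * g t) s z = derivWithin f s z * g z := by
  rw [derivWithin_fun_mul hf hg, hfz, zero_mul, add_zero]

section Flux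

variable {f χ : ℝ → ℝ} {s : Set ℝ}

theorem continuousOn_mul_zpow_mul_exp_mul_derivWithin_mul_exp_neg (hs : UniqueDiffOn ℝ s)
    (hs₀ : ∀ z ∈ s, z ≠ 0) (hf : ContDiffOn ℝ 1 f s) (hχ : ContDiffOn ℝ 1 χ s) (c : ℝ) (n : ℤ) :
    ContinuousOn (fun z => c * z ^ n * exp (χ z / 2) *
      derivWithin (fun t => f t * exp (-(χ t))) s z) s :=
  ((continuousOn_const.mul (continuousOn_id.zpow₀ n fun z hz => Or.inl (hs₀ z hz))).mul
    (hχ.continuousOn.div_const 2).rexp).mul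
    ((hf.mul hχ.neg.exp).continuousOn_derivWithin hs le_rfl)

theorem mul_zpow_mul_exp_mul_derivWithin_mul_exp_neg_of_eq_zero {z : ℝ}
    (hf : DifferentiableWithinAt ℝ f s z) (hχ : DifferentiableWithinAt ℝ χ s z) (hfz : f z = 0)
    (c : ℝ) (n : ℤ) :
    c * z ^ n * exp (χ z / 2) * derivWithin (fun t => f t * exp (-(χ t))) s z =
      c * z ^ n * exp (-(χ z) / 2) * derivWithin f s z := by
  rw [derivWithin_mul_of_eq_zero hf hχ.fun_neg.exp hfz,
    show -(χ z) / 2 = χ z / 2 + -(χ z) by ring, exp_add]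
  ring

end Flux

theorem zpow_mul_exp_mul_sub_mul_sq_nonneg {z w c k : ℝ} (n : ℤ) (x : ℝ) (hz : 0 < z)
    (hw : 0 ≤ w) (hc : 0 ≤ c) (hk : k ≤ 0) : 0 ≤ z ^ n * exp x * (w - c * k * z ^ 2) := by
  have : c * k * z ^ 2 ≤ 0 :=
    mul_nonpos_of_nonpos_of_nonneg (mul_nonpos_of_nonneg_of_nonpos hc hk) (sq_nonneg z)
  have : 0 ≤ w - c * k * z ^ 2 := by linarith
  positivity

/-- condition C2 (planar `k = 0` or hyperbolic `k = −1` topology,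
non-degenerate horizons). With `F z = (1/2) z^(1−d) e^(χ/2) (f e^(−χ))'` and
`F' = z^(−1−d) e^(−χ/2) [w − (d−2) k z²]` on `(z₁, z₂)` for some `w ≥ 0`
(the null energy condition), it is impossible that `f` has simple zeros at
`z₁` and `z₂` and is positive in between. -/
theorem no_two_nondegenerate_inner_horizons_C2
    (d : ℕ) (hd : 2 ≤ d)
    (k : ℝ) (hk : k = 0 ∨ k = -1)
    (z₁ z₂ : ℝ) (hz₁ : 0 < z₁) (hz : z₁ < z₂)
    (f χ : ℝ → ℝ)
    (hf : ContDiffOn ℝ 2 f (Set.Icc z₁ z₂))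
    (hχ : ContDiffOn ℝ 2 χ (Set.Icc z₁ z₂))
    (w : ℝ → ℝ) (hw : ∀ z ∈ Set.Icc z₁ z₂, 0 ≤ w z)
    (F : ℝ → ℝ)
    (hF : ∀ z, F z = (1 / 2) * z ^ (1 - (d : ℤ)) * Real.exp (χ z / 2) *
        derivWithin (fun s => f s * Real.exp (-(χ s))) (Set.Icc z₁ z₂) z)
    (hF' : ∀ z ∈ Set.Ioo z₁ z₂,
        HasDerivAt F
          (z ^ (-1 - (d : ℤ)) * Real.exp (-(χ z) / 2) *
            (w z - ((d : ℝ) - 2) * k * z ^ 2)) z) :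
    ¬ (f z₁ = 0 ∧ f z₂ = 0 ∧ (∀ z ∈ Set.Ioo z₁ z₂, 0 < f z) ∧
        derivWithin f (Set.Icc z₁ z₂) z₁ ≠ 0 ∧
        derivWithin f (Set.Icc z₁ z₂) z₂ ≠ 0) := by
  rintro ⟨hf₁, hf₂, hpos, hf'₁, hf'₂⟩
  have hnonneg : ∀ z ∈ Icc z₁ z₂, 0 ≤ f z := fun z hz' => by
    rcases eq_endpoints_or_mem_Ioo_of_mem_Icc hz' with rfl | rfl | hz'
    exacts [hf₁.ge, hf₂.ge, (hpos z hz').le]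
  have hslope₁ : 0 < derivWithin f (Icc z₁ z₂) z₁ :=
    (IsMinOn.derivWithin_Icc_left_nonneg hz fun z hz' => hf₁ ▸ hnonneg z hz').lt_of_ne' hf'₁
  have hslope₂ : derivWithin f (Icc z₁ z₂) z₂ < 0 :=
    (IsMinOn.derivWithin_Icc_right_nonpos hz fun z hz' => hf₂ ▸ hnonneg z hz').lt_of_ne hf'₂
  have hF_horizon : ∀ z ∈ Icc z₁ z₂, f z = 0 →
      F z = 1 / 2 * z ^ (1 - (d : ℤ)) * exp (-(χ z) / 2) * derivWithin f (Icc z₁ z₂) z :=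
    fun z hz' hfz => (hF z).trans <| mul_zpow_mul_exp_mul_derivWithin_mul_exp_neg_of_eq_zero
      (hf.differentiableOn two_ne_zero z hz') (hχ.differentiableOn two_ne_zero z hz') hfz _ _
  have hmono : MonotoneOn F (Icc z₁ z₂) := by
    refine monotoneOn_Icc_of_hasDerivAt_nonneg ?_ hF' fun z hz' =>
      zpow_mul_exp_mul_sub_mul_sq_nonneg _ _ (hz₁.trans hz'.1) (hw z (Ioo_subset_Icc_self hz'))
        (sub_nonneg.2 (by exact_mod_cast hd)) (by rcases hk with rfl | rfl <;> norm_num)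
    exact (continuousOn_mul_zpow_mul_exp_mul_derivWithin_mul_exp_neg (uniqueDiffOn_Icc hz)
      (fun z hz' => (hz₁.trans_le hz'.1).ne') (hf.of_le one_le_two) (hχ.of_le one_le_two)
      _ _).congr fun z _ => hF z
  have hF₁₂ := hmono (left_mem_Icc.2 hz.le) (right_mem_Icc.2 hz.le) hz.le
  rw [hF_horizon z₁ (left_mem_Icc.2 hz.le) hf₁, hF_horizon z₂ (right_mem_Icc.2 hz.le) hf₂] at hF₁₂
  have : 0 < z₂ := hz₁.trans hz
  exact hF₁₂.not_gt <| (mul_neg_of_pos_of_neg (by positivity) hslope₂).trans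
    (mul_pos (by positivity) hslope₁)
end

section
/- Let d ≥ 2 be an integer, k ∈ {0, −1}, and 0 < z₁ < z₂. Let f be real analytic on an open interval containing [z₁, z₂], let χ : [z₁, z₂] → ℝ be twice continuously differentiable, and let w : [z₁, z₂] → ℝ satisfy w(z) ≥ 0 for all z. Define F(z) = (1/2) z^{1−d} e^{χ(z)/2} · (f e^{−χ})'(z). Suppose F'(z) = z^{−1−d} e^{−χ(z)/2} [w(z) − (d−2) k z²] for all z ∈ (z₁, z₂). Then it is impossible that simultaneously f(z₁) = f(z₂) = 0 and f(z) > 0 for all z ∈ (z₁, z₂). -/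
/-- degenerate-horizon extension of condition C2 (Theorem 2) for
planar (`k = 0`) or hyperbolic (`k = −1`) topology: with `f` real analytic on an
open set containing `[z₁, z₂]`, `F z = (1/2) z^(1−d) e^(χ/2) (f e^(−χ))'` and
`F' = z^(−1−d) e^(−χ/2) [w − (d−2) k z²]` with `w ≥ 0` (null energy condition),
it is impossible that `f z₁ = f z₂ = 0` and `f > 0` on `(z₁, z₂)`. -/
theorem no_two_degenerate_inner_horizons_C2
    (d : ℕ) (hd : 2 ≤ d)
    (k : ℝ) (hk : k = 0 ∨ k = -1)
    (z₁ z₂ : ℝ) (hz₁ : 0 < z₁) (hz : z₁ < z₂)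
    (f χ : ℝ → ℝ)
    (U : Set ℝ) (hU : IsOpen U) (hUsub : Set.Icc z₁ z₂ ⊆ U)
    (hf : AnalyticOnNhd ℝ f U)
    (hχ : ContDiffOn ℝ 2 χ (Set.Icc z₁ z₂))
    (w : ℝ → ℝ) (hw : ∀ z ∈ Set.Icc z₁ z₂, 0 ≤ w z)
    (F : ℝ → ℝ)
    (hF : ∀ z, F z = (1 / 2) * z ^ (1 - (d : ℤ)) * Real.exp (χ z / 2) *
        derivWithin (fun s => f s * Real.exp (-(χ s))) (Set.Icc z₁ z₂) z)
    (hF' : ∀ z ∈ Set.Ioo z₁ z₂,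
        HasDerivAt F
          (z ^ (-1 - (d : ℤ)) * Real.exp (-(χ z) / 2) *
            (w z - ((d : ℝ) - 2) * k * z ^ 2)) z) :
    ¬ (f z₁ = 0 ∧ f z₂ = 0 ∧ ∀ z ∈ Set.Ioo z₁ z₂, 0 < f z) := by
  rintro ⟨h1, h2, hpos⟩
  set g : ℝ → ℝ := fun s => f s * Real.exp (-(χ s)) with hgdef
  have hm1 : z₁ < (z₁ + z₂) / 2 := by linarith
  have hm2 : (z₁ + z₂) / 2 < z₂ := by linarith
  set m := (z₁ + z₂) / 2 with hmdef
  -- differentiability of g at interior points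
  have hgdiff : ∀ x ∈ Set.Ioo z₁ z₂, DifferentiableAt ℝ g x := by
    intro x hx
    have hxI : x ∈ Set.Icc z₁ z₂ := Set.mem_Icc_of_Ioo hx
    have hfx : DifferentiableAt ℝ f x := (hf x (hUsub hxI)).differentiableAt
    have hχx : DifferentiableAt ℝ χ x := by
      have h := (hχ.differentiableOn (by norm_num)) x hxI
      exact h.differentiableAt (Icc_mem_nhds hx.1 hx.2)
    exact hfx.mul (hχx.neg.exp)
  have hgcont : ContinuousOn g (Set.Icc z₁ z₂) := by
    have hfc : ContinuousOn f (Set.Icc z₁ z₂) := fun x hx =>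
      ((hf x (hUsub hx)).continuousAt).continuousWithinAt
    exact hfc.mul (Real.continuous_exp.comp_continuousOn hχ.continuousOn.neg)
  have hg1 : g z₁ = 0 := by simp [hgdef, h1]
  have hg2 : g z₂ = 0 := by simp [hgdef, h2]
  have hgm : 0 < g m := mul_pos (hpos m ⟨hm1, hm2⟩) (Real.exp_pos _)
  -- MVT on [z₁, m] and [m, z₂]
  obtain ⟨a, ha, hda⟩ := exists_hasDerivAt_eq_slope g (fun x => deriv g x) hm1
    (hgcont.mono (Set.Icc_subset_Icc_right hm2.le))
    (fun x hx => (hgdiff x ⟨hx.1, hx.2.trans hm2⟩).hasDerivAt)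
  obtain ⟨b, hb, hdb⟩ := exists_hasDerivAt_eq_slope g (fun x => deriv g x) hm2
    (hgcont.mono (Set.Icc_subset_Icc_left hm1.le))
    (fun x hx => (hgdiff x ⟨hm1.trans hx.1, hx.2⟩).hasDerivAt)
  have haI : a ∈ Set.Ioo z₁ z₂ := ⟨ha.1, ha.2.trans hm2⟩
  have hbI : b ∈ Set.Ioo z₁ z₂ := ⟨hm1.trans hb.1, hb.2⟩
  have hda' : 0 < deriv g a := by
    rw [hda, hg1]
    apply div_pos (by linarith) (by linarith [ha.1, ha.2])
  have hdb' : deriv g b < 0 := by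
    rw [hdb, hg2]
    apply div_neg_of_neg_of_pos (by linarith) (by linarith [hb.1, hb.2])
  have ha0 : 0 < a := hz₁.trans haI.1
  have hb0 : 0 < b := hz₁.trans hbI.1
  have hFa : 0 < F a := by
    rw [hF a, derivWithin_of_mem_nhds (Icc_mem_nhds haI.1 haI.2)]
    exact mul_pos (mul_pos (mul_pos one_half_pos (zpow_pos ha0 _)) (Real.exp_pos _)) hda'
  have hFb : F b < 0 := by
    rw [hF b, derivWithin_of_mem_nhds (Icc_mem_nhds hbI.1 hbI.2)]
    exact mul_neg_of_pos_of_neg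
      (mul_pos (mul_pos one_half_pos (zpow_pos hb0 _)) (Real.exp_pos _)) hdb'
  have hab : a < b := ha.2.trans hb.1
  have hsub : Set.Icc a b ⊆ Set.Ioo z₁ z₂ := fun x hx => ⟨haI.1.trans_le hx.1, hx.2.trans_lt hbI.2⟩
  have hmono : MonotoneOn F (Set.Icc a b) := by
    apply monotoneOn_of_deriv_nonneg (convex_Icc a b)
    · intro x hx
      exact ((hF' x (hsub hx)).continuousAt).continuousWithinAt
    · intro x hx
      rw [interior_Icc] at hx
      exact ((hF' x (hsub (Set.mem_Icc_of_Ioo hx))).differentiableAt).differentiableWithinAt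
    · intro x hx
      rw [interior_Icc] at hx
      have hxI := hsub (Set.mem_Icc_of_Ioo hx)
      rw [(hF' x hxI).deriv]
      have hxIcc : x ∈ Set.Icc z₁ z₂ := Set.mem_Icc_of_Ioo hxI
      have hnn : 0 ≤ w x - ((d : ℝ) - 2) * k * x ^ 2 := by
        have hwx := hw x hxIcc
        have hd2 : (2 : ℝ) ≤ (d : ℝ) := by exact_mod_cast hd
        rcases hk with rfl | rfl
        · simpa using hwx
        · nlinarith [sq_nonneg x]
      have hx0 : 0 < x := hz₁.trans hxI.1
      exact mul_nonneg (mul_nonneg (zpow_pos hx0 _).le (Real.exp_pos _).le) hnn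
  have hle : F a ≤ F b :=
    hmono (Set.left_mem_Icc.mpr hab.le) (Set.right_mem_Icc.mpr hab.le) hab.le
  linarith
end

section
/- Let d ≥ 2 be an integer, k ∈ ℝ, and let f, χ be twice continuously differentiable real functions on an open interval I ⊆ (0, ∞) with f(z) > 0 for all z ∈ I. Define F(z) = (1/2) z^{1−d} e^{χ(z)/2} · (f e^{−χ})'(z), and define 𝓘(z) = (z^{1−d}/(d−1)) · [ (d−1) z^{d−1} · (z^{2−d} √(f(z)) · (√(f(z)) e^{−χ(z)/2}/z)')' + ((d−1)/2) (z f'(z) + (d−2) k z² − d f(z)) z^{−2} e^{−χ(z)/2} − ((d−1)/(2z²)) (d f(z) − z f'(z) − (d−2) k z² + f(z) z χ'(z)) e^{−χ(z)/2} − (e^{−χ(z)/2}/z²) (d−1)(d−2) k z² ]. Then F'(z) = 𝓘(z) for every z ∈ I. -/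
/-!
Write `Φ = ½ z^{1-d} (f' - f χ') e^{-χ/2}` and `H = f z^{-d} e^{-χ/2}`. Then `F = Φ`, and the function
differentiated in the first term of `𝓘` is `Φ - H`. Once the prefactor `z^{1-d}/(d-1)` is distributed,
the `k`-dependent terms of `𝓘` cancel and the remaining ones add up to exactly `H'`, so
`𝓘 = (Φ - H)' + H' = F'`.
-/

open Real Set Topology

lemma ContDiffOn.differentiableAt_deriv {f : ℝ → ℝ} {U : Set ℝ} {z : ℝ}
    (hf : ContDiffOn ℝ 2 f U) (hU : IsOpen U) (hz : z ∈ U) :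
    DifferentiableAt ℝ (deriv f) z :=
  ((hf.deriv_of_isOpen hU (by norm_num)).differentiableOn one_ne_zero).differentiableAt
    (hU.mem_nhds hz)

section Pointwise

variable {f χ : ℝ → ℝ} {s : ℝ}

lemma exp_half_mul_deriv_mul_exp_neg (hf : DifferentiableAt ℝ f s)
    (hχ : DifferentiableAt ℝ χ s) :
    exp (χ s / 2) * deriv (fun t => f t * exp (-χ t)) s
      = (deriv f s - f s * deriv χ s) * exp (-χ s / 2) := by
  have hderiv : HasDerivAt (fun t => f t * exp (-χ t)) _ s :=
    hf.hasDerivAt.mul hχ.hasDerivAt.neg.exp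
  rw [hderiv.deriv]
  have hexp : exp (χ s / 2) * exp (-χ s) = exp (-χ s / 2) := by
    rw [← exp_add]; ring_nf
  linear_combination (deriv f s - f s * deriv χ s) * hexp

lemma zpow_mul_sqrt_mul_deriv_sqrt_mul_exp_div (d : ℤ) (hf : DifferentiableAt ℝ f s)
    (hχ : DifferentiableAt ℝ χ s) (hfs : 0 < f s) (hs : s ≠ 0) :
    s ^ (2 - d) * √(f s) * deriv (fun t => √(f t) * exp (-χ t / 2) / t) s
      = (s ^ (1 - d) * (deriv f s - f s * deriv χ s) / 2 - f s * s ^ (-d)) *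
          exp (-χ s / 2) := by
  have hderiv : HasDerivAt (fun t => √(f t) * exp (-χ t / 2) / t) _ s :=
    ((hf.hasDerivAt.sqrt hfs.ne').mul (hχ.hasDerivAt.neg.div_const 2).exp).div
      (hasDerivAt_id s) hs
  rw [hderiv.deriv, show 2 - d = -d + 2 by ring, show 1 - d = -d + 1 by ring, zpow_add₀ hs,
    zpow_add₀ hs]
  simp only [Pi.mul_apply, Pi.neg_apply]
  field_simp
  rw [sq_sqrt hfs.le]
  ring

lemma hasDerivAt_mul_zpow_neg_mul_exp (d : ℤ) (hf : DifferentiableAt ℝ f s)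
    (hχ : DifferentiableAt ℝ χ s) (hs : s ≠ 0) :
    HasDerivAt (fun t => f t * t ^ (-d) * exp (-χ t / 2))
      ((deriv f s * s ^ (-d) - d * f s * s ^ (-d - 1) - f s * s ^ (-d) * deriv χ s / 2) *
        exp (-χ s / 2)) s := by
  have hderiv : HasDerivAt (fun t => f t * t ^ (-d) * exp (-χ t / 2)) _ s :=
    (hf.hasDerivAt.mul (hasDerivAt_zpow (-d) s (.inl hs))).mul
      (hχ.hasDerivAt.neg.div_const 2).exp
  convert hderiv using 1
  simp only [Pi.mul_apply, Pi.neg_apply]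
  push_cast
  ring

end Pointwise

/-- `f₀, f₁, χ₁, E` stand for `f z, f' z, χ' z, e^{-χ(z)/2}`, so the right-hand side is
`X + (f z^{-d} e^{-χ/2})'`. -/
lemma curvature_bracket_eq (d : ℕ) (hd : (d : ℝ) ≠ 1) (k z X f₀ f₁ χ₁ E : ℝ) (hz : z ≠ 0) :
    (z ^ (1 - (d : ℤ)) / ((d : ℝ) - 1)) *
        (((d : ℝ) - 1) * z ^ ((d : ℤ) - 1) * X
          + (((d : ℝ) - 1) / 2) * (z * f₁ + ((d : ℝ) - 2) * k * z ^ 2 - (d : ℝ) * f₀) *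
              z ^ (-2 : ℤ) * E
          - (((d : ℝ) - 1) / (2 * z ^ 2)) *
              ((d : ℝ) * f₀ - z * f₁ - ((d : ℝ) - 2) * k * z ^ 2 + f₀ * z * χ₁) * E
          - (E / z ^ 2) * (((d : ℝ) - 1) * ((d : ℝ) - 2) * k * z ^ 2))
      = X + (f₁ * z ^ (-(d : ℤ)) - d * f₀ * z ^ (-(d : ℤ) - 1)
          - f₀ * z ^ (-(d : ℤ)) * χ₁ / 2) * E := by
  simp only [zpow_sub₀ hz, zpow_neg, zpow_natCast, zpow_ofNat]
  field_simp
  ring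

/-- the purely geometric identity `F' = 𝓘` (Eq. (25) of the paper)
for the static metric ansatz `ds² = z⁻²[−f e^(−χ) dt² + f⁻¹ dz² + dΣ²_{k,d−1}]`,
valid for arbitrary `f > 0` and `χ` on an open interval `I ⊆ (0, ∞)`. -/
theorem geometric_identity_F_deriv_eq_I
    (d : ℕ) (hd : 2 ≤ d) (k : ℝ)
    (a b : ℝ) (ha : 0 ≤ a)
    (f χ : ℝ → ℝ)
    (hf : ContDiffOn ℝ 2 f (Set.Ioo a b))
    (hχ : ContDiffOn ℝ 2 χ (Set.Ioo a b))
    (hfpos : ∀ z ∈ Set.Ioo a b, 0 < f z)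
    (F 𝓘 : ℝ → ℝ)
    (hF : ∀ z, F z = (1 / 2) * z ^ (1 - (d : ℤ)) * Real.exp (χ z / 2) *
        deriv (fun s => f s * Real.exp (-(χ s))) z)
    (h𝓘 : ∀ z, 𝓘 z = (z ^ (1 - (d : ℤ)) / ((d : ℝ) - 1)) *
        (((d : ℝ) - 1) * z ^ ((d : ℤ) - 1) *
            deriv (fun s => s ^ ((2 : ℤ) - (d : ℤ)) * Real.sqrt (f s) *
              deriv (fun t => Real.sqrt (f t) * Real.exp (-(χ t) / 2) / t) s) z
          + (((d : ℝ) - 1) / 2) *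
              (z * deriv f z + ((d : ℝ) - 2) * k * z ^ 2 - (d : ℝ) * f z) *
              z ^ (-2 : ℤ) * Real.exp (-(χ z) / 2)
          - (((d : ℝ) - 1) / (2 * z ^ 2)) *
              ((d : ℝ) * f z - z * deriv f z - ((d : ℝ) - 2) * k * z ^ 2
                + f z * z * deriv χ z) * Real.exp (-(χ z) / 2)
          - (Real.exp (-(χ z) / 2) / z ^ 2) *
              (((d : ℝ) - 1) * ((d : ℝ) - 2) * k * z ^ 2))) :
    ∀ z ∈ Set.Ioo a b, deriv F z = 𝓘 z := by
  intro z hz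
  have hnhds : Ioo a b ∈ 𝓝 z := isOpen_Ioo.mem_nhds hz
  have hf₁ : ∀ s ∈ Ioo a b, DifferentiableAt ℝ f s := fun s hs =>
    (hf.contDiffAt (isOpen_Ioo.mem_nhds hs)).differentiableAt two_ne_zero
  have hχ₁ : ∀ s ∈ Ioo a b, DifferentiableAt ℝ χ s := fun s hs =>
    (hχ.contDiffAt (isOpen_Ioo.mem_nhds hs)).differentiableAt two_ne_zero
  have hz₀ : z ≠ 0 := (ha.trans_lt hz.1).ne'
  set Φ : ℝ → ℝ := fun s => s ^ (1 - (d : ℤ)) * (deriv f s - f s * deriv χ s) / 2 * exp (-χ s / 2)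
  set H : ℝ → ℝ := fun s => f s * s ^ (-(d : ℤ)) * exp (-χ s / 2)
  have hFΦ : F =ᶠ[𝓝 z] Φ := by
    filter_upwards [hnhds] with s hs
    rw [hF, mul_assoc _ (exp _), exp_half_mul_deriv_mul_exp_neg (hf₁ s hs) (hχ₁ s hs)]
    ring
  have hΦH : (fun s => s ^ ((2 : ℤ) - d) * √(f s) *
      deriv (fun t => √(f t) * exp (-χ t / 2) / t) s) =ᶠ[𝓝 z] Φ - H := by
    filter_upwards [hnhds] with s hs
    rw [zpow_mul_sqrt_mul_deriv_sqrt_mul_exp_div _ (hf₁ s hs) (hχ₁ s hs) (hfpos s hs)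
      (ha.trans_lt hs.1).ne']
    simp only [Pi.sub_apply, Φ, H]
    ring
  have hΦ : DifferentiableAt ℝ Φ z := by
    have := hf.differentiableAt_deriv isOpen_Ioo hz
    have := hχ.differentiableAt_deriv isOpen_Ioo hz
    have := hf₁ z hz
    have := hχ₁ z hz
    fun_prop (disch := exact .inl hz₀)
  have hH := hasDerivAt_mul_zpow_neg_mul_exp d (hf₁ z hz) (hχ₁ z hz) hz₀
  have hd₁ : (d : ℝ) ≠ 1 := by exact_mod_cast (show d ≠ 1 by omega)
  rw [hFΦ.deriv_eq, h𝓘, hΦH.deriv_eq, deriv_sub hΦ hH.differentiableAt, hH.deriv,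
    curvature_bracket_eq d hd₁ k z _ _ _ _ _ hz₀]
  push_cast
  ring
end
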